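/- Let (X,d_X) and (Y,d_Y) be quasi-metric spaces and assume there exists a submetry π from (X,d_X) onto (Y,d_Y), i.e., a surjective map π : X → Y such that π(B_{d_X}(p,r)) = B_{d_Y}(π(p),r) for all p ∈ X and all r > 0. If (X,d_X) satisfies the Weak Besicovitch Covering Property, then (Y,d_Y) satisfies the Weak Besicovitch Covering Property. -/

import Mathlib

/-!
A Besicovitch family in `Y` lifts to one of the same size in `X`. Choose `w` over the common
point `z`. Since `π` maps `B(w, r)` onto `B(z, r)` and the distances are symmetric, every
center `y` has a preimage `x_y` with `w ∈ B(x_y, r_y)`. Separation survives the lift because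
`π` maps `B(x_b, r_b)` into `B(b, r_b)`: from `x_a ∈ B(x_b, r_b)` we would get `a ∈ B(b, r_b)`.
-/

/-- The closed ball of center `p` and radius `r` for a distance-like function `d`. -/
def QBall {X : Type*} (d : X → X → ℝ) (p : X) (r : ℝ) : Set X := {q | d q p ≤ r}

/-- A quasi-distance: symmetric, vanishing exactly on the diagonal, nonnegative, and
satisfying a quasi-triangle inequality with multiplicative constant `C ≥ 1`. -/
def IsQuasiDist {X : Type*} (d : X → X → ℝ) : Prop :=
  (∀ p q, 0 ≤ d p q) ∧ (∀ p q, d p q = d q p) ∧ (∀ p q, d p q = 0 ↔ p = q) ∧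
    ∃ C : ℝ, 1 ≤ C ∧ ∀ p p' q, d p q ≤ C * (d p p' + d p' q)

/-- A family of Besicovitch balls. -/
def IsBesicovitchFamily {X : Type*} (d : X → X → ℝ) (s : Finset X) (r : X → ℝ) : Prop :=
  (∀ x ∈ s, 0 < r x) ∧ (∀ x ∈ s, ∀ y ∈ s, x ≠ y → x ∉ QBall d y (r y)) ∧
    ∃ z, ∀ x ∈ s, z ∈ QBall d x (r x)

/-- The Weak Besicovitch Covering Property. -/
def HasWBCP {X : Type*} (d : X → X → ℝ) : Prop :=
  ∃ Q : ℕ, 1 ≤ Q ∧ ∀ (s : Finset X) (r : X → ℝ), IsBesicovitchFamily d s r → s.card ≤ Q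

section

variable {X Y : Type*}

theorem mem_qBall_comm {d : X → X → ℝ} (hsymm : ∀ p q, d p q = d q p) {p q : X} {r : ℝ} :
    p ∈ QBall d q r ↔ q ∈ QBall d p r := by
  show d p q ≤ r ↔ d q p ≤ r
  rw [hsymm]

def IsSubmetry (dX : X → X → ℝ) (dY : Y → Y → ℝ) (π : X → Y) : Prop :=
  ∀ (p : X) (r : ℝ), 0 < r → π '' QBall dX p r = QBall dY (π p) r

namespace IsSubmetry

variable {dX : X → X → ℝ} {dY : Y → Y → ℝ} {π : X → Y}

theorem mapsTo_qBall (hπ : IsSubmetry dX dY π) (p : X) {r : ℝ} (hr : 0 < r) :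
    Set.MapsTo π (QBall dX p r) (QBall dY (π p) r) :=
  fun _ hq => hπ p r hr ▸ Set.mem_image_of_mem π hq

theorem exists_preimage_qBall_mem (hπ : IsSubmetry dX dY π)
    (hsymmX : ∀ p q, dX p q = dX q p) (hsymmY : ∀ p q, dY p q = dY q p)
    {w : X} {y : Y} {r : ℝ} (hr : 0 < r) (hw : π w ∈ QBall dY y r) :
    ∃ x, π x = y ∧ w ∈ QBall dX x r := by
  rw [mem_qBall_comm hsymmY, ← hπ w r hr] at hw
  obtain ⟨x, hx, rfl⟩ := hw
  exact ⟨x, rfl, (mem_qBall_comm hsymmX).1 hx⟩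

theorem isBesicovitchFamily_image [DecidableEq X] (hπ : IsSubmetry dX dY π) {s : Finset Y}
    {r : Y → ℝ} (hs : IsBesicovitchFamily dY s r) {g : Y → X} (hg : ∀ y ∈ s, π (g y) = y)
    {w : X} (hw : ∀ y ∈ s, w ∈ QBall dX (g y) (r y)) :
    IsBesicovitchFamily dX (s.image g) (r ∘ π) := by
  obtain ⟨hr, hsep, -⟩ := hs
  refine ⟨?_, ?_, w, ?_⟩
  · simp only [Finset.forall_mem_image, Function.comp_apply]
    intro y hy
    rw [hg y hy]
    exact hr y hy
  · simp only [Finset.forall_mem_image, Function.comp_apply]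
    intro a ha b hb hne hab
    rw [hg b hb] at hab
    refine hsep a ha b hb (fun h => hne (h ▸ rfl)) ?_
    simpa only [hg a ha, hg b hb] using hπ.mapsTo_qBall (g b) (hr b hb) hab
  · simp only [Finset.forall_mem_image, Function.comp_apply]
    intro y hy
    rw [hg y hy]
    exact hw y hy

theorem exists_isBesicovitchFamily_lift (hπ : IsSubmetry dX dY π) (hsurj : Function.Surjective π)
    (hsymmX : ∀ p q, dX p q = dX q p) (hsymmY : ∀ p q, dY p q = dY q p)
    {s : Finset Y} {r : Y → ℝ} (hs : IsBesicovitchFamily dY s r) :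
    ∃ (t : Finset X) (rX : X → ℝ), IsBesicovitchFamily dX t rX ∧ t.card = s.card := by
  obtain ⟨z, hz⟩ := hs.2.2
  obtain ⟨w, rfl⟩ := hsurj z
  have : Nonempty X := ⟨w⟩
  have hlift : ∀ y ∈ s, ∃ x, π x = y ∧ w ∈ QBall dX x (r y) := fun y hy =>
    hπ.exists_preimage_qBall_mem hsymmX hsymmY (hs.1 y hy) (hz y hy)
  choose! g hgπ hgw using hlift
  classical
  exact ⟨s.image g, r ∘ π, hπ.isBesicovitchFamily_image hs hgπ hgw,
    Finset.card_image_of_injOn (Set.LeftInvOn.injOn hgπ)⟩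

end IsSubmetry

end

theorem statement3 {X Y : Type*} (dX : X → X → ℝ) (dY : Y → Y → ℝ)
    (hdX : IsQuasiDist dX) (hdY : IsQuasiDist dY)
    (π : X → Y) (hsurj : Function.Surjective π)
    (hsubmetry : ∀ (p : X) (r : ℝ), 0 < r → π '' QBall dX p r = QBall dY (π p) r)
    (h : HasWBCP dX) : HasWBCP dY := by
  obtain ⟨Q, hQ, hX⟩ := h
  refine ⟨Q, hQ, fun s r hs => ?_⟩
  obtain ⟨t, rX, ht, hcard⟩ :=
    IsSubmetry.exists_isBesicovitchFamily_lift hsubmetry hsurj hdX.2.1 hdY.2.1 hs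
  exact hcard ▸ hX t rX ht
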